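/- arXiv:2403.06732 — 3 statements merged into one kernel-verified Lean document; each statement's English description precedes it below -/
import Mathlib

section
/- Let n, k, r, p be natural numbers with r ≤ min(n,k) and p ≥ r, and set ℓ = min(n,k). Let V ∈ ℝ^{n×r}, W ∈ ℝ^{n×p}, and h : ℝ^r → ℝ^p be any map, and let M = { V z + W h(z) : z ∈ ℝ^r } ⊆ ℝ^n. Let S ∈ ℝ^{n×k} be a matrix with columns x^(1), …, x^(k) and singular values σ_1 ≥ σ_2 ≥ … ≥ σ_ℓ ≥ 0. Then the total squared approximation error of the columns of S on M is bounded below by the tail of squared singular values: Σ_{i=1}^{k} inf_{x̂ ∈ M} ‖x̂ − x^(i)‖₂² ≥ Σ_{i=p+r+1}^{ℓ} σ_i². -/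
/-!
The manifold lies in the span `U` of the columns of `V` and `W`, a subspace of dimension at most
`p + r`, so each column of `S` is at least as far from the manifold as from `U`. Writing `P` for the
orthogonal projection onto `U`, the columns `∑_q σ_q v_q(i) u_q` have total squared distance to `U`
equal to `∑_q σ_q² (1 - t_q)` with `t_q = ‖P u_q‖²`. These weights satisfy `0 ≤ t_q ≤ 1` and, by
Bessel's inequality in an orthonormal basis of `U`, `∑_q t_q ≤ dim U ≤ p + r`; against the
decreasing `σ_q²`, such weights remove at most the `p + r` largest terms.
-/

open Finset RealInnerProductSpace

section Rearrangement

variable {ι : Type*} [Fintype ι] [DecidableEq ι]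

theorem sum_compl_le_sum_mul_one_sub (s : Finset ι) {a t : ι → ℝ} {c : ℝ} (hc : 0 ≤ c)
    (hs : ∀ i ∈ s, c ≤ a i) (hsc : ∀ i ∉ s, a i ≤ c)
    (ht0 : ∀ i, 0 ≤ t i) (ht1 : ∀ i, t i ≤ 1) (hts : ∑ i, t i ≤ #s) :
    ∑ i ∈ sᶜ, a i ≤ ∑ i, a i * (1 - t i) := by
  have hout : ∑ i ∈ sᶜ, a i * t i ≤ c * ∑ i ∈ sᶜ, t i := by
    rw [mul_sum]
    exact sum_le_sum fun i hi => mul_le_mul_of_nonneg_right (hsc i (mem_compl.mp hi)) (ht0 i)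
  have hin : c * ∑ i ∈ s, (1 - t i) ≤ ∑ i ∈ s, a i * (1 - t i) := by
    rw [mul_sum]
    exact sum_le_sum fun i hi => mul_le_mul_of_nonneg_right (hs i hi) (sub_nonneg.mpr (ht1 i))
  have hmass : ∑ i ∈ sᶜ, t i ≤ ∑ i ∈ s, (1 - t i) := by
    rw [sum_sub_distrib, sum_const, nsmul_one]
    linarith [sum_add_sum_compl s t]
  calc ∑ i ∈ sᶜ, a i = ∑ i ∈ sᶜ, a i * (1 - t i) + ∑ i ∈ sᶜ, a i * t i := by
        rw [← sum_add_distrib]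
        exact sum_congr rfl fun i _ => by ring
    _ ≤ ∑ i ∈ sᶜ, a i * (1 - t i) + c * ∑ i ∈ s, (1 - t i) := by
        gcongr; exact hout.trans (mul_le_mul_of_nonneg_left hmass hc)
    _ ≤ ∑ i ∈ sᶜ, a i * (1 - t i) + ∑ i ∈ s, a i * (1 - t i) := by gcongr
    _ = ∑ i, a i * (1 - t i) := by rw [add_comm, sum_add_sum_compl]

theorem sum_filter_le_le_sum_mul_one_sub {ℓ d : ℕ} {a t : Fin ℓ → ℝ} (ha : Antitone a)
    (ha0 : ∀ i, 0 ≤ a i) (ht0 : ∀ i, 0 ≤ t i) (ht1 : ∀ i, t i ≤ 1) (hts : ∑ i, t i ≤ d) :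
    ∑ i ∈ univ.filter (fun i : Fin ℓ => d ≤ (i : ℕ)), a i ≤ ∑ i, a i * (1 - t i) := by
  by_cases hd : d < ℓ
  · have hcompl : (Iio (⟨d, hd⟩ : Fin ℓ))ᶜ = univ.filter (fun i : Fin ℓ => d ≤ (i : ℕ)) := by
      ext i; simp [Fin.lt_def]
    rw [← hcompl]
    refine sum_compl_le_sum_mul_one_sub _ (ha0 ⟨d, hd⟩) (fun i hi => ha (le_of_lt (mem_Iio.mp hi)))
      (fun i hi => ha (not_lt.mp (mem_Iio.not.mp hi))) ht0 ht1 ?_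
    rwa [Fin.card_Iio]
  · have hempty : univ.filter (fun i : Fin ℓ => d ≤ (i : ℕ)) = ∅ :=
      filter_false_of_mem fun i _ => by omega
    rw [hempty, sum_empty]
    exact sum_nonneg fun i _ => mul_nonneg (ha0 i) (sub_nonneg.mpr (ht1 i))

end Rearrangement

section InnerProductSpace

variable {E : Type*} [NormedAddCommGroup E] [InnerProductSpace ℝ E]

theorem sum_norm_sq_sum_mul_smul_of_orthonormal_rows {ι κ : Type*} [Fintype ι] [DecidableEq ι]
    [Fintype κ] (c : ι → ℝ) {v : ι → κ → ℝ}
    (hv : ∀ q q', ∑ i, v q i * v q' i = if q = q' then 1 else 0) (w : ι → E) :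
    ∑ i, ‖∑ q, (c q * v q i) • w q‖ ^ 2 = ∑ q, c q ^ 2 * ‖w q‖ ^ 2 := by
  calc ∑ i, ‖∑ q, (c q * v q i) • w q‖ ^ 2
      = ∑ i, ∑ q, ∑ q', c q * v q i * (c q' * v q' i * ⟪w q', w q⟫) := by
        simp only [← real_inner_self_eq_norm_sq, sum_inner, inner_sum, real_inner_smul_left,
          real_inner_smul_right]
    _ = ∑ q, ∑ q', c q * c q' * ⟪w q', w q⟫ * ∑ i, v q i * v q' i := by
        rw [sum_comm]
        refine sum_congr rfl fun q _ => ?_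
        rw [sum_comm]
        simp only [mul_sum]
        exact sum_congr rfl fun q' _ => sum_congr rfl fun i _ => by ring
    _ = ∑ q, c q ^ 2 * ‖w q‖ ^ 2 := by
        simp [hv, pow_two]

theorem sum_norm_starProjection_sq_le_finrank {ι : Type*} [Fintype ι] (K : Submodule ℝ E)
    [FiniteDimensional ℝ K] {e : ι → E} (he : Orthonormal ℝ e) :
    ∑ q, ‖K.starProjection (e q)‖ ^ 2 ≤ Module.finrank ℝ K := by
  let b := stdOrthonormalBasis ℝ K
  have hparseval : ∀ q, ‖K.starProjection (e q)‖ ^ 2 = ∑ j, ⟪e q, (b j : E)⟫ ^ 2 := by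
    intro q
    rw [K.starProjection_apply, Submodule.norm_coe, ← b.sum_sq_inner_right]
    simp only [Submodule.inner_orthogonalProjectionOnto_eq_of_mem_left, real_inner_comm]
  calc ∑ q, ‖K.starProjection (e q)‖ ^ 2 = ∑ j, ∑ q, ⟪e q, (b j : E)⟫ ^ 2 := by
        simp_rw [hparseval]; exact sum_comm
    _ ≤ ∑ j, ‖(b j : E)‖ ^ 2 := sum_le_sum fun j _ => by
        simpa [real_inner_comm] using he.sum_inner_products_le (b j : E) (s := univ)
    _ = Module.finrank ℝ K := by simp [Submodule.norm_coe, b.norm_eq_one]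

theorem norm_starProjection_orthogonal_le {K : Submodule ℝ E} [K.HasOrthogonalProjection]
    (x : E) {y : E} (hy : y ∈ K) : ‖Kᗮ.starProjection x‖ ≤ ‖x - y‖ := by
  rw [K.starProjection_orthogonal_val, K.starProjection_minimal]
  exact ciInf_le ⟨0, Set.forall_mem_range.mpr fun _ => norm_nonneg _⟩ (⟨y, hy⟩ : K)

end InnerProductSpace

theorem orthonormal_toLp_of_sum_mul_eq_ite {ι κ : Type*} [DecidableEq ι] [Fintype κ]
    {u : ι → κ → ℝ} (hu : ∀ i j, ∑ x, u i x * u j x = if i = j then 1 else 0) :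
    Orthonormal ℝ fun i => (WithLp.toLp 2 (u i) : EuclideanSpace ℝ κ) :=
  orthonormal_iff_ite.mpr fun i j => by
    simpa [EuclideanSpace.inner_toLp_toLp, dotProduct, mul_comm] using hu i j

theorem sq_norm_starProjection_orthogonal_le_sInf {ι : Type*} [Fintype ι]
    (K : Submodule ℝ (EuclideanSpace ℝ ι)) (x : EuclideanSpace ℝ ι) {M : Set (ι → ℝ)}
    (hMK : ∀ y ∈ M, WithLp.toLp 2 y ∈ K) (hM : M.Nonempty) :
    ‖Kᗮ.starProjection x‖ ^ 2 ≤ sInf ((fun y => ∑ j, (y j - x j) ^ 2) '' M) := by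
  refine le_csInf (hM.image _) ?_
  rintro _ ⟨y, hy, rfl⟩
  calc ‖Kᗮ.starProjection x‖ ^ 2 ≤ ‖WithLp.toLp 2 y - x‖ ^ 2 := by
        rw [norm_sub_rev]; gcongr; exact norm_starProjection_orthogonal_le x (hMK y hy)
    _ = ∑ j, (y j - x j) ^ 2 := EuclideanSpace.real_norm_sq_eq _

section Matrix

variable {ι κ₁ κ₂ : Type*} [Fintype κ₁] [DecidableEq κ₁] [Fintype κ₂] [DecidableEq κ₂]

theorem finrank_range_toLpLin_sup_le (A : Matrix ι κ₁ ℝ) (B : Matrix ι κ₂ ℝ) :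
    Module.finrank ℝ
        ↥(LinearMap.range (Matrix.toLpLin 2 2 A) ⊔ LinearMap.range (Matrix.toLpLin 2 2 B))
      ≤ Fintype.card κ₁ + Fintype.card κ₂ := by
  refine (Submodule.finrank_add_le_finrank_add_finrank _ _).trans (add_le_add ?_ ?_) <;>
    exact (LinearMap.finrank_range_le _).trans_eq (finrank_euclideanSpace (𝕜 := ℝ))

theorem toLp_mulVec_add_mulVec_mem_sup (A : Matrix ι κ₁ ℝ) (B : Matrix ι κ₂ ℝ) (x : κ₁ → ℝ)
    (y : κ₂ → ℝ) :
    WithLp.toLp 2 (A.mulVec x + B.mulVec y) ∈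
      LinearMap.range (Matrix.toLpLin 2 2 A) ⊔ LinearMap.range (Matrix.toLpLin 2 2 B) :=
  Submodule.add_mem_sup (LinearMap.mem_range_self _ (WithLp.toLp 2 x))
    (LinearMap.mem_range_self _ (WithLp.toLp 2 y))

end Matrix

theorem toLp_col_sum_smul_vecMulVec {ι κ₁ κ₂ : Type*} [Fintype ι] (σ : ι → ℝ) (u : ι → κ₁ → ℝ)
    (v : ι → κ₂ → ℝ) (i : κ₂) :
    WithLp.toLp 2 (fun j => (∑ q, σ q • Matrix.vecMulVec (u q) (v q)) j i)
      = ∑ q, (σ q * v q i) • WithLp.toLp 2 (u q) := by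
  ext j
  simp only [Matrix.sum_apply, Matrix.smul_apply, Matrix.vecMulVec_apply, WithLp.ofLp_sum,
    WithLp.ofLp_smul, Finset.sum_apply, Pi.smul_apply, smul_eq_mul]
  exact sum_congr rfl fun q _ => by ring

theorem manifold_approx_lower_bound_general
    (n k r p : ℕ)
    (V : Matrix (Fin n) (Fin r) ℝ) (W : Matrix (Fin n) (Fin p) ℝ)
    (h : (Fin r → ℝ) → (Fin p → ℝ))
    (S : Matrix (Fin n) (Fin k) ℝ)
    (σ : Fin (min n k) → ℝ) (u : Fin (min n k) → Fin n → ℝ)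
    (v : Fin (min n k) → Fin k → ℝ)
    (hσdec : ∀ i j : Fin (min n k), i ≤ j → σ j ≤ σ i)
    (hσ0 : ∀ i, 0 ≤ σ i)
    (hu : ∀ i j, ∑ x, u i x * u j x = if i = j then (1 : ℝ) else 0)
    (hv : ∀ i j, ∑ y, v i y * v j y = if i = j then (1 : ℝ) else 0)
    (hS : S = ∑ i, σ i • Matrix.vecMulVec (u i) (v i)) :
    ∑ i : Fin k,
        sInf ((fun xhat : Fin n → ℝ => ∑ j, (xhat j - S j i) ^ 2) ''
          {xhat | ∃ z : Fin r → ℝ, xhat = V.mulVec z + W.mulVec (h z)})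
      ≥ ∑ i ∈ Finset.univ.filter (fun i : Fin (min n k) => p + r ≤ (i : ℕ)), σ i ^ 2 := by
  set U := LinearMap.range (Matrix.toLpLin 2 2 V) ⊔ LinearMap.range (Matrix.toLpLin 2 2 W)
  set e : Fin (min n k) → EuclideanSpace ℝ (Fin n) := fun q => WithLp.toLp 2 (u q)
  have he : Orthonormal ℝ e := orthonormal_toLp_of_sum_mul_eq_ite hu
  have hU : Module.finrank ℝ U ≤ p + r := by
    simpa [add_comm] using finrank_range_toLpLin_sup_le V W
  have hM : ∀ xhat ∈ {xhat | ∃ z : Fin r → ℝ, xhat = V.mulVec z + W.mulVec (h z)},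
      WithLp.toLp 2 xhat ∈ U := by
    rintro _ ⟨z, rfl⟩
    exact toLp_mulVec_add_mulVec_mem_sup V W z (h z)
  have hproj_le : ∀ q, ‖U.starProjection (e q)‖ ^ 2 ≤ 1 := fun q => by
    simpa [he.1 q] using pow_le_pow_left₀ (norm_nonneg _) (U.norm_starProjection_apply_le (e q)) 2
  rw [ge_iff_le]
  calc ∑ i ∈ univ.filter (fun i : Fin (min n k) => p + r ≤ (i : ℕ)), σ i ^ 2
      ≤ ∑ q, σ q ^ 2 * (1 - ‖U.starProjection (e q)‖ ^ 2) :=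
        sum_filter_le_le_sum_mul_one_sub
          (fun i j hij => pow_le_pow_left₀ (hσ0 j) (hσdec i j hij) 2) (fun i => sq_nonneg _)
          (fun q => sq_nonneg _) hproj_le
          ((sum_norm_starProjection_sq_le_finrank U he).trans (by exact_mod_cast hU))
    _ = ∑ q, σ q ^ 2 * ‖Uᗮ.starProjection (e q)‖ ^ 2 := by
        congr! 2 with q
        have hpyth := U.norm_sq_eq_add_norm_sq_starProjection (e q)
        rw [he.1 q] at hpyth
        linarith
    _ = ∑ i, ‖Uᗮ.starProjection (WithLp.toLp 2 (fun j => S j i))‖ ^ 2 := by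
        rw [← sum_norm_sq_sum_mul_smul_of_orthonormal_rows σ hv]
        simp only [hS, toLp_col_sum_smul_vecMulVec, map_sum, map_smul, e]
    _ ≤ _ := sum_le_sum fun i _ => sq_norm_starProjection_orthogonal_le_sInf U _ hM ⟨_, 0, rfl⟩

/-- lower bound for approximation on a feature-map manifold. -/
theorem manifold_approx_lower_bound
    (n k r p : ℕ) (hr : r ≤ min n k) (hp : p ≥ r)
    (V : Matrix (Fin n) (Fin r) ℝ) (W : Matrix (Fin n) (Fin p) ℝ)
    (h : (Fin r → ℝ) → (Fin p → ℝ))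
    (S : Matrix (Fin n) (Fin k) ℝ)
    (σ : Fin (min n k) → ℝ) (u : Fin (min n k) → Fin n → ℝ)
    (v : Fin (min n k) → Fin k → ℝ)
    (hσdec : ∀ i j : Fin (min n k), i ≤ j → σ j ≤ σ i)
    (hσ0 : ∀ i, 0 ≤ σ i)
    (hu : ∀ i j, ∑ x, u i x * u j x = if i = j then (1 : ℝ) else 0)
    (hv : ∀ i j, ∑ y, v i y * v j y = if i = j then (1 : ℝ) else 0)
    (hS : S = ∑ i, σ i • Matrix.vecMulVec (u i) (v i)) :
    ∑ i : Fin k,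
        sInf ((fun xhat : Fin n → ℝ => ∑ j, (xhat j - S j i) ^ 2) ''
          {xhat | ∃ z : Fin r → ℝ, xhat = V.mulVec z + W.mulVec (h z)})
      ≥ ∑ i ∈ Finset.univ.filter (fun i : Fin (min n k) => p + r ≤ (i : ℕ)), σ i ^ 2 :=
  manifold_approx_lower_bound_general n k r p V W h S σ u v hσdec hσ0 hu hv hS
end

section
/- Let U ∈ ℝ^{n×m} have orthonormal columns (Uᵀ U = I_m), let B ∈ ℝ^{m×k}, H ∈ ℝ^{p×k}, and γ ≥ 0. Then the regularized least-squares problems over the full-dimensional and the reduced-dimensional weight matrices have the same optimal value: inf_{W ∈ ℝ^{n×p}} ( ‖U B − W H‖_F² + γ ‖W‖_F² ) = inf_{W' ∈ ℝ^{m×p}} ( ‖B − W' H‖_F² + γ ‖W'‖_F² ). -/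
/-!
Left multiplication by `U` is an isometry for the Frobenius norm, so `W' ↦ U W'` maps every
reduced candidate to a full one of the same cost. Conversely `W ↦ Uᵀ W` does not increase the
cost, because `Uᵀ` is a contraction (`U Uᵀ` is an orthogonal projection) and
`Uᵀ (U B - W H) = B - (Uᵀ W) H`.
-/

open Matrix

section

variable {ι κ μ ν : Type*} [Fintype ι] [Fintype κ] [Fintype μ] [Fintype ν]

lemma sum_sum_sq_eq_trace_transpose_mul (A : Matrix ι κ ℝ) :
    ∑ i, ∑ j, A i j ^ 2 = trace (Aᵀ * A) := by
  simp only [trace, diag_apply, mul_apply, transpose_apply, sq]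
  rw [Finset.sum_comm]

variable [DecidableEq μ] {U : Matrix ι μ ℝ}

lemma sum_sum_sq_mul_of_transpose_mul_eq_one (hU : Uᵀ * U = 1) (X : Matrix μ κ ℝ) :
    ∑ i, ∑ j, (U * X) i j ^ 2 = ∑ i, ∑ j, X i j ^ 2 := by
  rw [sum_sum_sq_eq_trace_transpose_mul, sum_sum_sq_eq_trace_transpose_mul, transpose_mul,
    Matrix.mul_assoc, ← Matrix.mul_assoc Uᵀ U X, hU, Matrix.one_mul]

lemma sum_sum_sq_transpose_mul_le_of_transpose_mul_eq_one (hU : Uᵀ * U = 1)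
    (A : Matrix ι κ ℝ) : ∑ i, ∑ j, (Uᵀ * A) i j ^ 2 ≤ ∑ i, ∑ j, A i j ^ 2 := by
  set R := A - U * (Uᵀ * A)
  have hR : Rᵀ * R = Aᵀ * A - (Uᵀ * A)ᵀ * (Uᵀ * A) := by
    have hUUA : Uᵀ * (U * (Uᵀ * A)) = Uᵀ * A := by
      rw [← Matrix.mul_assoc, hU, Matrix.one_mul]
    simp only [R, transpose_sub, transpose_mul, transpose_transpose, Matrix.sub_mul,
      Matrix.mul_sub, Matrix.mul_assoc, hUUA]
    abel
  have hR_nonneg : 0 ≤ trace (Rᵀ * R) := by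
    rw [← sum_sum_sq_eq_trace_transpose_mul]
    positivity
  rw [hR, trace_sub, sub_nonneg, ← sum_sum_sq_eq_trace_transpose_mul,
    ← sum_sum_sq_eq_trace_transpose_mul] at hR_nonneg
  exact hR_nonneg

def ridgeCost (Y : Matrix ι κ ℝ) (H : Matrix ν κ ℝ) (γ : ℝ) (W : Matrix ι ν ℝ) : ℝ :=
  ∑ i, ∑ j, (Y - W * H) i j ^ 2 + γ * ∑ i, ∑ j, W i j ^ 2

lemma bddBelow_range_ridgeCost (Y : Matrix ι κ ℝ) (H : Matrix ν κ ℝ) {γ : ℝ} (hγ : 0 ≤ γ) :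
    BddBelow (Set.range (ridgeCost Y H γ)) := by
  refine ⟨0, ?_⟩
  rintro _ ⟨W, rfl⟩
  unfold ridgeCost
  positivity

lemma ridgeCost_mul_mul_of_transpose_mul_eq_one (hU : Uᵀ * U = 1) (Y : Matrix μ κ ℝ)
    (H : Matrix ν κ ℝ) (γ : ℝ) (W : Matrix μ ν ℝ) :
    ridgeCost (U * Y) H γ (U * W) = ridgeCost Y H γ W := by
  rw [ridgeCost, ridgeCost, Matrix.mul_assoc, ← Matrix.mul_sub,
    sum_sum_sq_mul_of_transpose_mul_eq_one hU, sum_sum_sq_mul_of_transpose_mul_eq_one hU]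

lemma ridgeCost_transpose_mul_le_of_transpose_mul_eq_one (hU : Uᵀ * U = 1)
    (Y : Matrix ι κ ℝ) (H : Matrix ν κ ℝ) {γ : ℝ} (hγ : 0 ≤ γ) (W : Matrix ι ν ℝ) :
    ridgeCost (Uᵀ * Y) H γ (Uᵀ * W) ≤ ridgeCost Y H γ W := by
  rw [ridgeCost, ridgeCost, Matrix.mul_assoc, ← Matrix.mul_sub]
  gcongr <;> exact sum_sum_sq_transpose_mul_le_of_transpose_mul_eq_one hU _

end

/-- for `U` with orthonormal columns, the regularized least-squares
problems over `W ∈ ℝ^{n×p}` (full dimension) and `W' ∈ ℝ^{m×p}` (reduced dimension)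
have the same optimal value. -/
theorem regularized_lsq_dimension_reduction
    (n m p k : ℕ)
    (U : Matrix (Fin n) (Fin m) ℝ) (hU : Uᵀ * U = 1)
    (B : Matrix (Fin m) (Fin k) ℝ) (H : Matrix (Fin p) (Fin k) ℝ)
    (γ : ℝ) (hγ : 0 ≤ γ) :
    (⨅ W : Matrix (Fin n) (Fin p) ℝ,
        (∑ a, ∑ b, ((U * B - W * H) a b) ^ 2) + γ * ∑ a, ∑ b, (W a b) ^ 2)
      = ⨅ W' : Matrix (Fin m) (Fin p) ℝ,
          (∑ a, ∑ b, ((B - W' * H) a b) ^ 2) + γ * ∑ a, ∑ b, (W' a b) ^ 2 := by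
  change ⨅ W, ridgeCost (U * B) H γ W = ⨅ W', ridgeCost B H γ W'
  have hB : Uᵀ * (U * B) = B := by rw [← Matrix.mul_assoc, hU, Matrix.one_mul]
  apply le_antisymm
  · refine ciInf_mono_of_forall_exists (bddBelow_range_ridgeCost _ H hγ) fun W' => ⟨U * W', ?_⟩
    exact (ridgeCost_mul_mul_of_transpose_mul_eq_one hU B H γ W').le
  · refine ciInf_mono_of_forall_exists (bddBelow_range_ridgeCost _ H hγ) fun W => ⟨Uᵀ * W, ?_⟩
    simpa only [hB] using ridgeCost_transpose_mul_le_of_transpose_mul_eq_one hU (U * B) H hγ W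
end

section
/- Let n ≥ k, let S ∈ ℝ^{n×k} admit the decomposition S = Σ_{i=1}^{k} σ_i u_i v_iᵀ with u_1, …, u_k ∈ ℝ^n orthonormal, v_1, …, v_k ∈ ℝ^k orthonormal and σ_i ≥ 0, let J ⊆ {1, …, k} with |J| = i, and let P = U_J U_Jᵀ be the orthogonal projector onto span{u_j : j ∈ J}. Let H ∈ ℝ^{p×k} and γ ≥ 0. Then inf_{W ∈ ℝ^{n×p}} ( ‖P S + W H − S‖_F² + γ ‖W‖_F² ) = inf_{W' ∈ ℝ^{(k−i)×p}} ( ‖Σ_{Jᶜ} V_{Jᶜ}ᵀ + W' H‖_F² + γ ‖W'‖_F² ), where Σ_{Jᶜ} is the diagonal matrix of the σ_j with j ∉ J and V_{Jᶜ} has columns v_j, j ∉ J. -/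
/-!
Write `S = U M` with `U = [u₁ ⋯ u_k]` (orthonormal columns) and `M = Σ Vᵀ`. Then
`S - P S = U_{Jᶜ} M_{Jᶜ}`, so the left objective is `‖W H - U_{Jᶜ} M_{Jᶜ}‖² + γ ‖W‖²`.
Since `Q := U_{Jᶜ}` satisfies `Qᵀ Q = 1`, the substitution `W = -Q W'` turns it into the right
objective, while `W' = -Qᵀ W` does not increase either term because `Qᵀ` is a contraction.
-/

open Matrix

namespace Matrix

section Projector

variable {R m κ c : Type*} [Fintype m] [CommRing R] [DecidableEq κ]

theorem transpose_mul_self_submatrix_eq_one {U : Matrix m κ R} (hU : Uᵀ * U = 1) {ι : Type*}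
    [DecidableEq ι] {e : ι → κ} (he : Function.Injective e) :
    (U.submatrix id e)ᵀ * U.submatrix id e = 1 := by
  rw [transpose_submatrix, ← submatrix_mul _ _ _ _ _ Function.bijective_id, hU,
    submatrix_one _ he]

theorem mul_sub_projector_mul [Fintype κ] {U : Matrix m κ R} (hU : Uᵀ * U = 1) (J : Finset κ)
    (M : Matrix κ c R) :
    U * M - U.submatrix id ((↑) : J → κ)
        * ((U.submatrix id ((↑) : J → κ))ᵀ * (U * M))
      = U.submatrix id ((↑) : {j // j ∉ J} → κ) * M.submatrix ((↑) : {j // j ∉ J} → κ) id := by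
  have hproj : (U.submatrix id ((↑) : J → κ))ᵀ * (U * M) = M.submatrix ((↑) : J → κ) id := by
    rw [transpose_submatrix, ← submatrix_id_id (U * M),
      ← submatrix_mul _ _ _ _ _ Function.bijective_id, ← Matrix.mul_assoc, hU, Matrix.one_mul]
  have hsplit : U * M = U.submatrix id ((↑) : J → κ) * M.submatrix ((↑) : J → κ) id
      + U.submatrix id ((↑) : {j // j ∉ J} → κ) * M.submatrix ((↑) : {j // j ∉ J} → κ) id := by
    ext x y
    simp only [mul_apply, add_apply, submatrix_apply, id]
    convert (Fintype.sum_subtype_add_sum_subtype (· ∈ J) fun j => U x j * M j y).symm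
  rw [hproj, sub_eq_iff_eq_add']
  exact hsplit

end Projector

variable {m n r c p : Type*} [Fintype m] [Fintype n] [Fintype r] [Fintype c]

def frobeniusSq (A : Matrix m n ℝ) : ℝ :=
  ∑ a, ∑ b, A a b ^ 2

theorem frobeniusSq_eq_trace (A : Matrix m n ℝ) : frobeniusSq A = trace (Aᵀ * A) := by
  rw [frobeniusSq, trace, Finset.sum_comm]
  simp [mul_apply, sq]

theorem frobeniusSq_nonneg (A : Matrix m n ℝ) : 0 ≤ frobeniusSq A := by
  unfold frobeniusSq
  positivity

@[simp]
theorem frobeniusSq_neg (A : Matrix m n ℝ) : frobeniusSq (-A) = frobeniusSq A := by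
  simp [frobeniusSq]

section Isometry

variable [DecidableEq n] {Q : Matrix m n ℝ}

theorem frobeniusSq_mul_of_transpose_mul_self_eq_one (hQ : Qᵀ * Q = 1) (X : Matrix n c ℝ) :
    frobeniusSq (Q * X) = frobeniusSq X := by
  rw [frobeniusSq_eq_trace, frobeniusSq_eq_trace, transpose_mul, Matrix.mul_assoc,
    ← Matrix.mul_assoc Qᵀ, hQ, Matrix.one_mul]

theorem frobeniusSq_eq_transpose_mul_add [DecidableEq m] (hQ : Qᵀ * Q = 1) (Y : Matrix m c ℝ) :
    frobeniusSq Y = frobeniusSq (Qᵀ * Y) + frobeniusSq ((1 - Q * Qᵀ) * Y) := by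
  set E : Matrix m m ℝ := 1 - Q * Qᵀ
  have hE : Eᵀ * E = E := by
    simp only [E, transpose_sub, transpose_one, transpose_mul, transpose_transpose,
      Matrix.sub_mul, Matrix.mul_sub, Matrix.one_mul, Matrix.mul_one]
    rw [Matrix.mul_assoc, ← Matrix.mul_assoc Qᵀ, hQ, Matrix.one_mul]
    abel
  have hEY : (E * Y)ᵀ * (E * Y) = Yᵀ * Y - (Qᵀ * Y)ᵀ * (Qᵀ * Y) := by
    rw [transpose_mul, Matrix.mul_assoc, ← Matrix.mul_assoc Eᵀ, hE]
    simp only [E, Matrix.sub_mul, Matrix.mul_sub, Matrix.one_mul, transpose_mul,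
      transpose_transpose, Matrix.mul_assoc]
  rw [frobeniusSq_eq_trace, frobeniusSq_eq_trace, frobeniusSq_eq_trace, hEY, trace_sub]
  ring

theorem frobeniusSq_transpose_mul_le [DecidableEq m] (hQ : Qᵀ * Q = 1) (Y : Matrix m c ℝ) :
    frobeniusSq (Qᵀ * Y) ≤ frobeniusSq Y := by
  rw [frobeniusSq_eq_transpose_mul_add hQ Y]
  exact le_add_of_nonneg_right (frobeniusSq_nonneg _)

end Isometry

theorem bddBelow_range_frobeniusSq_add {ι : Type*} (F : ι → Matrix m n ℝ) (G : ι → Matrix r c ℝ)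
    {γ : ℝ} (hγ : 0 ≤ γ) :
    BddBelow (Set.range fun x => frobeniusSq (F x) + γ * frobeniusSq (G x)) :=
  ⟨0, by
    rintro _ ⟨x, rfl⟩
    exact add_nonneg (frobeniusSq_nonneg _) (mul_nonneg hγ (frobeniusSq_nonneg _))⟩

theorem iInf_frobeniusSq_of_transpose_mul_self [Fintype p] [DecidableEq m]
    [DecidableEq r] {Q : Matrix m r ℝ} (hQ : Qᵀ * Q = 1) (M : Matrix r c ℝ) (H : Matrix p c ℝ)
    {γ : ℝ} (hγ : 0 ≤ γ) :
    ⨅ W : Matrix m p ℝ, frobeniusSq (W * H - Q * M) + γ * frobeniusSq W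
      = ⨅ W' : Matrix r p ℝ, frobeniusSq (M + W' * H) + γ * frobeniusSq W' := by
  apply le_antisymm
  · refine le_ciInf fun W' =>
      (ciInf_le (bddBelow_range_frobeniusSq_add _ id hγ) (-(Q * W'))).trans_eq ?_
    have hres : -(Q * W') * H - Q * M = -(Q * (M + W' * H)) := by
      rw [Matrix.neg_mul, Matrix.mul_assoc, Matrix.mul_add]
      abel
    simp only [id, hres, frobeniusSq_neg, frobeniusSq_mul_of_transpose_mul_self_eq_one hQ]
  · refine le_ciInf fun W =>
      (ciInf_le (bddBelow_range_frobeniusSq_add _ id hγ) (-(Qᵀ * W))).trans ?_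
    have hres : M + -(Qᵀ * W) * H = -(Qᵀ * (W * H - Q * M)) := by
      rw [Matrix.mul_sub, ← Matrix.mul_assoc Qᵀ Q, hQ, Matrix.one_mul, Matrix.neg_mul,
        Matrix.mul_assoc]
      abel
    simp only [id, hres, frobeniusSq_neg]
    exact add_le_add (frobeniusSq_transpose_mul_le hQ _)
      (mul_le_mul_of_nonneg_left (frobeniusSq_transpose_mul_le hQ _) hγ)

end Matrix

theorem greedy_objective_reduced_formulation_general
    (n k p : ℕ)
    (S : Matrix (Fin n) (Fin k) ℝ)
    (σ : Fin k → ℝ) (u : Fin k → Fin n → ℝ) (v : Fin k → Fin k → ℝ)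
    (hu : ∀ i' j, ∑ x, u i' x * u j x = if i' = j then (1 : ℝ) else 0)
    (hS : S = ∑ j, σ j • Matrix.vecMulVec (u j) (v j))
    (J : Finset (Fin k))
    (UJ : Matrix (Fin n) {j : Fin k // j ∈ J} ℝ)
    (hUJ : ∀ x (j : {j : Fin k // j ∈ J}), UJ x j = u j.val x)
    (P : Matrix (Fin n) (Fin n) ℝ)
    (hP : P = UJ * UJᵀ)
    (H : Matrix (Fin p) (Fin k) ℝ)
    (γ : ℝ) (hγ : 0 ≤ γ) :
    (⨅ W : Matrix (Fin n) (Fin p) ℝ,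
        (∑ a, ∑ b, ((P * S + W * H - S) a b) ^ 2) + γ * ∑ a, ∑ b, (W a b) ^ 2)
      = ⨅ W' : Matrix {j : Fin k // j ∉ J} (Fin p) ℝ,
          (∑ a, ∑ b,
            (((Matrix.of fun (j : {j : Fin k // j ∉ J}) (c : Fin k) => σ j.val * v j.val c)
              + W' * H) a b) ^ 2) + γ * ∑ a, ∑ b, (W' a b) ^ 2 := by
  set U : Matrix (Fin n) (Fin k) ℝ := of fun x j => u j x
  set M : Matrix (Fin k) (Fin k) ℝ := of fun j c => σ j * v j c
  set Uc := U.submatrix id (Subtype.val : {j // j ∉ J} → Fin k)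
  have hU : Uᵀ * U = 1 := by
    ext i j
    simp [U, mul_apply, one_apply, hu]
  have hSU : S = U * M := by
    ext x c
    simp [hS, U, M, mul_apply, Matrix.sum_apply, vecMulVec_apply, mul_left_comm]
  have hUJ' : UJ = U.submatrix id Subtype.val := by
    ext x j
    simp [U, hUJ]
  have hPS : S - P * S = Uc * M.submatrix Subtype.val id := by
    rw [hP, hUJ', hSU, Matrix.mul_assoc]
    exact mul_sub_projector_mul hU J M
  have hres : ∀ W : Matrix (Fin n) (Fin p) ℝ,
      P * S + W * H - S = W * H - Uc * M.submatrix Subtype.val id := by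
    intro W
    rw [← hPS]
    abel
  simp only [hres]
  exact iInf_frobeniusSq_of_transpose_mul_self
    (transpose_mul_self_submatrix_eq_one hU Subtype.val_injective) _ H hγ

/-- with `P = U_J U_Jᵀ` the projector onto the span of the left-singular
vectors with indices in `J` (with `|J| = i`), the regularized least-squares problem over
`W ∈ ℝ^{n×p}` for the correction term has the same optimal value as the reduced problem
over `W' ∈ ℝ^{(k-i)×p}` with data `Σ_{Jᶜ} V_{Jᶜ}ᵀ`. -/
theorem greedy_objective_reduced_formulation
    (n k i p : ℕ) (hkn : k ≤ n)
    (S : Matrix (Fin n) (Fin k) ℝ)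
    (σ : Fin k → ℝ) (u : Fin k → Fin n → ℝ) (v : Fin k → Fin k → ℝ)
    (hσ0 : ∀ j, 0 ≤ σ j)
    (hu : ∀ i' j, ∑ x, u i' x * u j x = if i' = j then (1 : ℝ) else 0)
    (hv : ∀ i' j, ∑ y, v i' y * v j y = if i' = j then (1 : ℝ) else 0)
    (hS : S = ∑ j, σ j • Matrix.vecMulVec (u j) (v j))
    (J : Finset (Fin k)) (hJcard : J.card = i)
    (UJ : Matrix (Fin n) {j : Fin k // j ∈ J} ℝ)
    (hUJ : ∀ x (j : {j : Fin k // j ∈ J}), UJ x j = u j.val x)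
    (P : Matrix (Fin n) (Fin n) ℝ)
    (hP : P = UJ * UJᵀ)
    (H : Matrix (Fin p) (Fin k) ℝ)
    (γ : ℝ) (hγ : 0 ≤ γ) :
    (⨅ W : Matrix (Fin n) (Fin p) ℝ,
        (∑ a, ∑ b, ((P * S + W * H - S) a b) ^ 2) + γ * ∑ a, ∑ b, (W a b) ^ 2)
      = ⨅ W' : Matrix {j : Fin k // j ∉ J} (Fin p) ℝ,
          (∑ a, ∑ b,
            (((Matrix.of fun (j : {j : Fin k // j ∉ J}) (c : Fin k) => σ j.val * v j.val c)
              + W' * H) a b) ^ 2) + γ * ∑ a, ∑ b, (W' a b) ^ 2 :=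
  greedy_objective_reduced_formulation_general n k p S σ u v hu hS J UJ hUJ P hP H γ hγ
end
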